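/- arXiv:2205.14989 — 3 statements merged into one kernel-verified Lean document; each statement's English description precedes it below -/
import Mathlib

section
/- Let D be a type, let A be a meet-semilattice, and let (α : Set D → A, γ : A → Set D) form a Galois connection between Set D (ordered by inclusion) and A. Let f : D → D and let S : Set D be such that f x = x for every x ∈ S. Let f̄ : A → A be a sound abstraction of f, i.e. for every a : A the image f '' (γ a) ⊆ γ (f̄ a). Define f̃ : A → A by f̃ a = a ⊓ f̄ a. Then α S is a fixpoint of f̃, i.e. α S ⊓ f̄ (α S) = α S. -/
theorem abstraction_fixpoint
    {D : Type*} {A : Type*} [SemilatticeInf A]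
    (α : Set D → A) (γ : A → Set D)
    (gc : ∀ (P : Set D) (a : A), α P ≤ a ↔ P ⊆ γ a)
    (f : D → D) (S : Set D)
    (hfix : ∀ x ∈ S, f x = x)
    (fbar : A → A)
    (hsound : ∀ a : A, f '' (γ a) ⊆ γ (fbar a)) :
    α S ⊓ fbar (α S) = α S := by
  have hS : S ⊆ γ (α S) := (gc S (α S)).mp le_rfl
  have h : α S ≤ fbar (α S) := by
    rw [gc]
    intro x hx
    have : f x ∈ γ (fbar (α S)) := hsound _ ⟨x, hS hx, rfl⟩
    rwa [hfix x hx] at this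
  exact inf_eq_left.mpr h
end

section
/- Let D be a type, let A be a meet-semilattice, and let (α : Set D → A, γ : A → Set D) form a Galois connection between Set D (ordered by inclusion) and A. Let f : D → D and let S : Set D be such that f x = x for every x ∈ S, and let f̄ : A → A be a sound abstraction of f (for every a : A, f '' (γ a) ⊆ γ (f̄ a)). Let (a_n) be the sequence in A defined by an initial a_0 with S ⊆ γ (a_0) and a_{n+1} = a_n ⊓ f̄ (a_n). Then a_n is a sound abstraction of S for every natural number n, i.e. S ⊆ γ (a_n) for all n. -/
theorem iterate_sound_abstraction
    {D : Type*} {A : Type*} [SemilatticeInf A]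
    (α : Set D → A) (γ : A → Set D)
    (gc : ∀ (P : Set D) (a : A), α P ≤ a ↔ P ⊆ γ a)
    (f : D → D) (S : Set D)
    (hfix : ∀ x ∈ S, f x = x)
    (fbar : A → A)
    (hsound : ∀ a : A, f '' (γ a) ⊆ γ (fbar a))
    (a : ℕ → A)
    (h0 : S ⊆ γ (a 0))
    (hstep : ∀ n : ℕ, a (n + 1) = a n ⊓ fbar (a n)) :
    ∀ n : ℕ, S ⊆ γ (a n) := by
  intro n
  induction n with
  | zero => exact h0
  | succ n ih =>
    rw [hstep n]
    have h2 : S ⊆ γ (fbar (a n)) := fun x hx => by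
      have : f x ∈ γ (fbar (a n)) := hsound (a n) ⟨x, ih hx, rfl⟩
      rwa [hfix x hx] at this
    have : α S ≤ a n ⊓ fbar (a n) :=
      le_inf ((gc S (a n)).mpr ih) ((gc S (fbar (a n))).mpr h2)
    exact (gc S _).mp this
end

section
/- Let D be a type, let A be a meet-semilattice, and let (α : Set D → A, γ : A → Set D) form a Galois connection between Set D (ordered by inclusion) and A. Let f : D → D and let S : Set D be such that f x = x for every x ∈ S, and let f̄ : A → A be a sound abstraction of f (for every a : A, f '' (γ a) ⊆ γ (f̄ a)). Let (a_n) satisfy S ⊆ γ (a_0) and a_{n+1} = a_n ⊓ f̄ (a_n). If the sequence stabilises at step N, i.e. a_{N+1} = a_N, then a* := a_N is a fixpoint of f̃ (a* ⊓ f̄ a* = a*), and α S ≼ a*. -/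
theorem stabilised_fixpoint
    {D : Type*} {A : Type*} [SemilatticeInf A]
    (α : Set D → A) (γ : A → Set D)
    (gc : ∀ (P : Set D) (a : A), α P ≤ a ↔ P ⊆ γ a)
    (f : D → D) (S : Set D)
    (hfix : ∀ x ∈ S, f x = x)
    (fbar : A → A)
    (hsound : ∀ a : A, f '' (γ a) ⊆ γ (fbar a))
    (a : ℕ → A)
    (h0 : S ⊆ γ (a 0))
    (hstep : ∀ n : ℕ, a (n + 1) = a n ⊓ fbar (a n))
    (N : ℕ) (hstab : a (N + 1) = a N) :
    a N ⊓ fbar (a N) = a N ∧ α S ≤ a N := by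
  have key : ∀ n, S ⊆ γ (a n) := by
    intro n
    induction n with
    | zero => exact h0
    | succ n ih =>
      rw [hstep n, ← gc]
      have h1 : α S ≤ a n := (gc S (a n)).mpr ih
      have h2 : α S ≤ fbar (a n) := by
        rw [gc]
        intro x hx
        have : f x ∈ γ (fbar (a n)) := hsound (a n) ⟨x, ih hx, rfl⟩
        rwa [hfix x hx] at this
      exact le_inf h1 h2
  exact ⟨by rw [← hstep N, hstab], (gc S (a N)).mpr (key N)⟩
end
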